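/- Define G(x) = √(x² + 2x)/(1+x) for x > 0 and let c₀ = (√17 − 3)/4. Then the function t ↦ G(e^t) = √(e^{2t} + 2e^t)/(1 + e^t) is concave on the interval [ln(c₀), ∞). -/

import Mathlib

/-!
With `x = eᵗ`, the derivative of `t ↦ G(eᵗ)` is `x G'(x) = x / ((1 + x)² √(x² + 2x))`, and its
derivative in `x` is `-(2x² + 3x - 1) / ((1 + x)³ (x + 2) √(x² + 2x))`. Since `c₀` is the positive
root of `2x² + 3x - 1`, the derivative of `t ↦ G(eᵗ)` is antitone where `eᵗ ≥ c₀`.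
-/

open Real Set

namespace ChannelDispersion

noncomputable def G (x : ℝ) : ℝ := √(x ^ 2 + 2 * x) / (1 + x)

noncomputable def dGdLog (x : ℝ) : ℝ := x / ((1 + x) ^ 2 * √(x ^ 2 + 2 * x))

noncomputable def c₀ : ℝ := (√17 - 3) / 4

theorem hasDerivAt_sqrt_sq_add_two_mul {x : ℝ} (hx : 0 < x) :
    HasDerivAt (fun x => √(x ^ 2 + 2 * x)) ((1 + x) / √(x ^ 2 + 2 * x)) x := by
  have hq : HasDerivAt (fun x => x ^ 2 + 2 * x) (2 * x + 2) x := by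
    refine (((hasDerivAt_id' x).pow 2).add ((hasDerivAt_id' x).const_mul 2)).congr_deriv ?_
    ring
  refine (hq.sqrt (by positivity)).congr_deriv ?_
  field_simp
  ring

theorem hasDerivAt_G {x : ℝ} (hx : 0 < x) :
    HasDerivAt G ((1 + x) ^ 2 * √(x ^ 2 + 2 * x))⁻¹ x := by
  have hs : √(x ^ 2 + 2 * x) ^ 2 = x ^ 2 + 2 * x := sq_sqrt (by positivity)
  have hs₀ : 0 < √(x ^ 2 + 2 * x) := by positivity
  refine ((hasDerivAt_sqrt_sq_add_two_mul hx).div ((hasDerivAt_id' x).const_add 1)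
    (by positivity)).congr_deriv ?_
  generalize √(x ^ 2 + 2 * x) = s at hs hs₀ ⊢
  field_simp
  linear_combination -hs

theorem hasDerivAt_G_exp (t : ℝ) : HasDerivAt (fun t => G (exp t)) (dGdLog (exp t)) t :=
  ((hasDerivAt_G (exp_pos t)).comp t (hasDerivAt_exp t)).congr_deriv (by
    rw [dGdLog, div_eq_inv_mul])

theorem hasDerivAt_dGdLog {x : ℝ} (hx : 0 < x) :
    HasDerivAt dGdLog
      (-(2 * x ^ 2 + 3 * x - 1) / ((1 + x) ^ 3 * (x + 2) * √(x ^ 2 + 2 * x))) x := by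
  have hs : √(x ^ 2 + 2 * x) ^ 2 = x ^ 2 + 2 * x := sq_sqrt (by positivity)
  have hs₀ : 0 < √(x ^ 2 + 2 * x) := by positivity
  have hden := (((hasDerivAt_id' x).const_add 1).fun_pow 2).fun_mul
    (hasDerivAt_sqrt_sq_add_two_mul hx)
  refine ((hasDerivAt_id' x).fun_div hden (by positivity)).congr_deriv ?_
  generalize √(x ^ 2 + 2 * x) = s at hs hs₀ ⊢
  field_simp
  linear_combination (1 + x) ^ 3 * hs

theorem c₀_pos : 0 < c₀ := by
  rw [c₀, div_pos_iff_of_pos_right four_pos, sub_pos]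
  exact lt_sqrt_of_sq_lt (by norm_num)

theorem two_mul_c₀_sq_add_three_mul_c₀ : 2 * c₀ ^ 2 + 3 * c₀ = 1 := by
  have := sq_sqrt (show (0:ℝ) ≤ 17 by norm_num)
  rw [c₀]
  linear_combination this / 8

theorem antitoneOn_dGdLog : AntitoneOn dGdLog (Ici c₀) := by
  have hderiv (x : ℝ) (hx : x ∈ Ici c₀) := hasDerivAt_dGdLog (c₀_pos.trans_le hx)
  refine antitoneOn_of_hasDerivWithinAt_nonpos (convex_Ici c₀)
    (fun x hx => (hderiv x hx).continuousAt.continuousWithinAt)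
    (fun x hx => (hderiv x (interior_subset hx)).hasDerivWithinAt) (fun x hx => ?_)
  rw [interior_Ici, mem_Ioi] at hx
  have hx₀ : 0 < x := c₀_pos.trans hx
  have hquad : 0 ≤ 2 * x ^ 2 + 3 * x - 1 := by
    nlinarith [two_mul_c₀_sq_add_three_mul_c₀, mul_pos (sub_pos.2 hx) (add_pos hx₀ c₀_pos)]
  exact div_nonpos_of_nonpos_of_nonneg (neg_nonpos.2 hquad) (by positivity)

end ChannelDispersion

open ChannelDispersion

/-- `t ↦ G(eᵗ) = √(e^{2t} + 2eᵗ)/(1 + eᵗ)` is concave on `[ln((√17−3)/4), ∞)`. -/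
theorem G_exp_concaveOn :
    ConcaveOn ℝ (Set.Ici (Real.log ((Real.sqrt 17 - 3) / 4)))
      (fun t : ℝ => Real.sqrt (Real.exp (2 * t) + 2 * Real.exp t) / (1 + Real.exp t)) := by
  have hG : (fun t : ℝ => √(exp (2 * t) + 2 * exp t) / (1 + exp t)) = fun t => G (exp t) := by
    funext t
    rw [G, sq, ← exp_add, two_mul]
  have hc₀ (t : ℝ) (ht : t ∈ interior (Ici (log c₀))) : exp t ∈ Ici c₀ :=
    (log_le_iff_le_exp c₀_pos).1 (interior_subset ht)
  rw [hG]
  refine AntitoneOn.concaveOn_of_deriv (convex_Ici _)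
    (fun t _ => (hasDerivAt_G_exp t).continuousAt.continuousWithinAt)
    (fun t _ => (hasDerivAt_G_exp t).differentiableAt.differentiableWithinAt) ?_
  rw [funext fun t => (hasDerivAt_G_exp t).deriv]
  exact fun s hs t ht hst => antitoneOn_dGdLog (hc₀ s hs) (hc₀ t ht) (exp_le_exp.2 hst)
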